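/- Let N, d ≥ 1 and let f : ℝ^d → ℝ^d and u satisfy: f is odd with f(0) = 0, one-sided Lipschitz with constant L_f ∈ ℝ, and locally Lipschitz with polynomial growth, |f(z) − f(z')| ≤ L̂_f (1 + |z|^q + |z'|^q)|z − z'| for some L̂_f, q > 0; for every probability measure μ, x ↦ u(x, μ) is one-sided Lipschitz with constant L_u ∈ ℝ and satisfies |u(x, μ) − u(x', μ)| ≤ L̂_u (1 + |x|^q + |x'|^q)|x − x'| for some L̂_u > 0; and u is Lipschitz along empirical measures with constant L_ũ ≥ 0. Let h ∈ (0, 1) satisfy h·ζ < 1, where ζ := max{2(L_f + L_u), 4 L_f⁺ + 2 L_u + 2 L_ũ + 1, 0} and L_f⁺ := max{L_f, 0}. Then for every X ∈ (ℝ^d)^N there exists a unique Y ∈ (ℝ^d)^N such that Y = X + h·V(Y); moreover, the map sending X to this unique solution Y is continuous (in particular Borel measurable). -/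

import Mathlib

/-!
Write `V` for the system map on `(ℝ^d)^N` with its Euclidean structure, so that the implicit
step is `G Y = X` for `G = id - h V`. Oddness of `f` antisymmetrises the pairwise forces, and
together with the one-sided Lipschitz bounds on `f`, `u` and the Lipschitz bound along empirical
measures this makes `V` one-sided Lipschitz with constant
`κ = 2 L_f⁺ + L_u + L_ũ / 2 + 1 / 2 ≤ ζ / 2`. Hence `G` is strongly monotone with constant
`1 - h κ > 0`, so it is injective with a Lipschitz inverse on its image. For surjectivity, the
polynomial growth bounds make `G` Lipschitz on balls, and on the ball of radius
`2 ‖G 0 - X‖ / (1 - h κ)` a relaxation `y ↦ y - c (G y - X)` is a self-contraction whose fixed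
point solves `G y = X`.
-/

open RealInnerProductSpace MeasureTheory

/-- The empirical measure `μ^a := (1/N) ∑_{j=1}^N δ_{a_j}` of an `N`-tuple of points. -/
noncomputable def empMeas {d N : ℕ} (a : Fin N → EuclideanSpace ℝ (Fin d)) :
    Measure (EuclideanSpace ℝ (Fin d)) :=
  (N : ENNReal)⁻¹ • ∑ j, Measure.dirac (a j)

/-- The interaction drift `v` evaluated along an empirical measure:
`v(x, μ^a) = u(x, μ^a) + (1/N) ∑_j f(x − a_j)`. -/
noncomputable def vEmp {d N : ℕ}
    (f : EuclideanSpace ℝ (Fin d) → EuclideanSpace ℝ (Fin d))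
    (u : EuclideanSpace ℝ (Fin d) → Measure (EuclideanSpace ℝ (Fin d)) →
      EuclideanSpace ℝ (Fin d))
    (x : EuclideanSpace ℝ (Fin d)) (a : Fin N → EuclideanSpace ℝ (Fin d)) :
    EuclideanSpace ℝ (Fin d) :=
  u x (empMeas a) + (N : ℝ)⁻¹ • ∑ j, f (x - a j)

open Metric Set Function

theorem exists_isFixedPt_of_lipschitzOnWith_closedBall {E : Type*} [NormedAddCommGroup E]
    [CompleteSpace E] {T : E → E} {θ : NNReal} {r : ℝ} (hθ : θ < 1)
    (hT : LipschitzOnWith θ T (closedBall 0 r)) (h0 : ‖T 0‖ ≤ (1 - θ) * r) :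
    ∃ y, IsFixedPt T y := by
  have hr : 0 ≤ r := nonneg_of_mul_nonneg_right ((norm_nonneg _).trans h0)
    (sub_pos.2 (by exact_mod_cast hθ))
  have hmaps : MapsTo T (closedBall 0 r) (closedBall 0 r) := by
    intro y hy
    rw [mem_closedBall_zero_iff] at hy ⊢
    calc ‖T y‖ ≤ ‖T y - T 0‖ + ‖T 0‖ := norm_le_norm_sub_add _ _
      _ ≤ θ * ‖y - 0‖ + (1 - θ) * r :=
        add_le_add (hT.norm_sub_le (mem_closedBall_zero_iff.2 hy) (mem_closedBall_self hr)) h0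
      _ ≤ r := by rw [sub_zero]; nlinarith [θ.coe_nonneg]
  obtain ⟨y, -, hy, -⟩ := ContractingWith.exists_fixedPoint' isClosed_closedBall.isComplete
    hmaps ⟨hθ, hT.mapsToRestrict hmaps⟩ (mem_closedBall_self hr) (edist_ne_top _ _)
  exact ⟨y, hy⟩

section StronglyMonotone

variable {H : Type*} [NormedAddCommGroup H] [InnerProductSpace ℝ H] {G : H → H} {m : ℝ}

lemma antilipschitzWith_of_strongly_monotone (hm : 0 < m)
    (hG : ∀ x y, m * ‖x - y‖ ^ 2 ≤ ⟪x - y, G x - G y⟫) :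
    AntilipschitzWith (Real.toNNReal m⁻¹) G := by
  refine AntilipschitzWith.of_le_mul_dist fun x y => ?_
  rw [dist_eq_norm, dist_eq_norm, Real.coe_toNNReal _ (inv_nonneg.2 hm.le), ← div_eq_inv_mul,
    le_div_iff₀ hm]
  have := (hG x y).trans (real_inner_le_norm _ _)
  nlinarith [norm_nonneg (x - y), norm_nonneg (G x - G y)]

lemma norm_sub_smul_sq_le {Δ Γ : H} {K c : ℝ} (hc : 0 ≤ c) (hm : m * ‖Δ‖ ^ 2 ≤ ⟪Δ, Γ⟫)
    (hK : ‖Γ‖ ≤ K * ‖Δ‖) :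
    ‖Δ - c • Γ‖ ^ 2 ≤ (1 - 2 * c * m + c ^ 2 * K ^ 2) * ‖Δ‖ ^ 2 := by
  have hK2 : ‖Γ‖ ^ 2 ≤ K ^ 2 * ‖Δ‖ ^ 2 := by
    rw [← mul_pow]; exact pow_le_pow_left₀ (norm_nonneg _) hK 2
  rw [norm_sub_sq_real, norm_smul, real_inner_smul_right, Real.norm_of_nonneg hc]
  nlinarith [mul_le_mul_of_nonneg_left hK2 (sq_nonneg c)]

lemma lipschitzOnWith_sub_smul_sub {s : Set H} {L : ℝ} (hm : 0 < m) (hmL : m ≤ L)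
    (hG : ∀ x y, m * ‖x - y‖ ^ 2 ≤ ⟪x - y, G x - G y⟫)
    (hGL : ∀ y ∈ s, ∀ y' ∈ s, ‖G y - G y'‖ ≤ L * ‖y - y'‖) (X : H) :
    LipschitzOnWith (Real.toNNReal (1 - m ^ 2 / (2 * L ^ 2)))
      (fun y => y - (m / L ^ 2) • (G y - X)) s := by
  have hL : 0 < L := hm.trans_le hmL
  have hρ : m ^ 2 / L ^ 2 ≤ 1 := (div_le_one (by positivity)).2 (pow_le_pow_left₀ hm.le hmL 2)
  refine LipschitzOnWith.of_dist_le' fun y hy y' hy' => ?_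
  rw [dist_eq_norm, dist_eq_norm, show ∀ a b : H, (y - a) - (y' - b) = (y - y') - (a - b) from
    fun a b => by abel, ← smul_sub, sub_sub_sub_cancel_right]
  have hθ : 0 ≤ 1 - m ^ 2 / (2 * L ^ 2) := by
    rw [mul_comm, ← div_div]; linarith
  refine le_of_sq_le_sq ?_ (by positivity)
  refine (norm_sub_smul_sq_le (by positivity) (hG y y') (hGL y hy y' hy')).trans ?_
  rw [mul_pow]
  refine mul_le_mul_of_nonneg_right ?_ (by positivity)
  have : 1 - 2 * (m / L ^ 2) * m + (m / L ^ 2) ^ 2 * L ^ 2 = 1 - m ^ 2 / L ^ 2 := by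
    field_simp; ring
  rw [this]
  nlinarith [sq_nonneg (m ^ 2 / L ^ 2), show m ^ 2 / (2 * L ^ 2) = m ^ 2 / L ^ 2 / 2 by ring]

theorem surjective_of_strongly_monotone [CompleteSpace H] (hm : 0 < m)
    (hG : ∀ x y, m * ‖x - y‖ ^ 2 ≤ ⟪x - y, G x - G y⟫)
    (hloc : ∀ R, ∃ K, LipschitzOnWith K G (closedBall 0 R)) : Surjective G := by
  intro X
  set r := 2 * ‖G 0 - X‖ / m
  obtain ⟨K, hK⟩ := hloc r
  set L : ℝ := K + m
  have hmL : m ≤ L := le_add_of_nonneg_left K.coe_nonneg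
  have hL : 0 < L := hm.trans_le hmL
  have hT := lipschitzOnWith_sub_smul_sub hm hmL hG
    (fun y hy y' hy' => (hK.norm_sub_le hy hy').trans
      (by gcongr; exact le_add_of_nonneg_right hm.le)) X
  have hθ : 0 ≤ 1 - m ^ 2 / (2 * L ^ 2) := by
    rw [sub_nonneg, div_le_one (by positivity)]; nlinarith
  obtain ⟨y, hy⟩ := exists_isFixedPt_of_lipschitzOnWith_closedBall
    (by rw [Real.toNNReal_lt_one, sub_lt_self_iff]; positivity) hT
    (by
      rw [Real.coe_toNNReal _ hθ, zero_sub, norm_neg, norm_smul,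
        Real.norm_of_nonneg (by positivity)]
      apply le_of_eq; simp only [r]; field_simp; ring)
  have : (m / L ^ 2) • (G y - X) = 0 := sub_eq_self.mp hy
  exact ⟨y, sub_eq_zero.mp ((smul_eq_zero.mp this).resolve_left (by positivity))⟩

variable {V : H → H} {h κ : ℝ}

lemma strongly_monotone_sub_smul (hh : 0 ≤ h)
    (hV : ∀ x y, ⟪x - y, V x - V y⟫ ≤ κ * ‖x - y‖ ^ 2) (x y : H) :
    (1 - h * κ) * ‖x - y‖ ^ 2 ≤ ⟪x - y, (x - h • V x) - (y - h • V y)⟫ := by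
  rw [sub_sub_sub_comm, ← smul_sub, inner_sub_right, real_inner_smul_right,
    real_inner_self_eq_norm_sq]
  nlinarith [mul_le_mul_of_nonneg_left (hV x y) hh]

lemma lipschitzOnWith_sub_smul {s : Set H} {K : NNReal} (hh : 0 ≤ h)
    (hV : LipschitzOnWith K V s) :
    LipschitzOnWith (Real.toNNReal (1 + h * K)) (fun y => y - h • V y) s := by
  refine LipschitzOnWith.of_dist_le' fun x hx y hy => ?_
  rw [dist_eq_norm, dist_eq_norm, sub_sub_sub_comm, ← smul_sub]
  calc ‖(x - y) - h • (V x - V y)‖ ≤ ‖x - y‖ + h * ‖V x - V y‖ :=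
        (norm_sub_le _ _).trans_eq (by rw [norm_smul, Real.norm_of_nonneg hh])
    _ ≤ ‖x - y‖ + h * (K * ‖x - y‖) := by gcongr; exact hV.norm_sub_le hx hy
    _ = (1 + h * K) * ‖x - y‖ := by ring

theorem exists_continuous_implicit_step_solution [CompleteSpace H] (hh : 0 ≤ h)
    (hκ : h * κ < 1) (hV : ∀ x y, ⟪x - y, V x - V y⟫ ≤ κ * ‖x - y‖ ^ 2)
    (hloc : ∀ R, ∃ K, LipschitzOnWith K V (closedBall 0 R)) :
    ∃ Φ : H → H, Continuous Φ ∧ ∀ X Y, Y = X + h • V Y ↔ Y = Φ X := by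
  set G : H → H := fun y => y - h • V y
  have hG := strongly_monotone_sub_smul hh hV
  have hsurj : Surjective G := surjective_of_strongly_monotone (sub_pos.2 hκ) hG fun R =>
    let ⟨_, hK⟩ := hloc R; ⟨_, lipschitzOnWith_sub_smul hh hK⟩
  have hanti := antilipschitzWith_of_strongly_monotone (sub_pos.2 hκ) hG
  refine ⟨surjInv hsurj, (hanti.to_rightInverse (rightInverse_surjInv hsurj)).continuous,
    fun X Y => ?_⟩
  rw [← sub_eq_iff_eq_add]
  exact ⟨fun hY => hanti.injective (hY.trans (surjInv_eq hsurj X).symm),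
    fun hY => hY ▸ surjInv_eq hsurj X⟩

end StronglyMonotone

lemma norm_sub_sq_le_two_mul_add {E : Type*} [SeminormedAddCommGroup E] (a b : E) :
    ‖a - b‖ ^ 2 ≤ 2 * ‖a‖ ^ 2 + 2 * ‖b‖ ^ 2 := by
  nlinarith [norm_sub_le a b, norm_nonneg (a - b), sq_nonneg (‖a‖ - ‖b‖)]

section Interaction

variable {ι E : Type*} [Fintype ι] [NormedAddCommGroup E] [InnerProductSpace ℝ E]

lemma two_mul_sum_sum_inner_of_antisymm (a : ι → E) {g : ι → ι → E}
    (hg : ∀ i j, g j i = -g i j) :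
    2 * ∑ i, ∑ j, ⟪a i, g i j⟫ = ∑ i, ∑ j, ⟪a i - a j, g i j⟫ := by
  have hswap : ∑ i, ∑ j, ⟪a j, g i j⟫ = -∑ i, ∑ j, ⟪a i, g i j⟫ := by
    rw [Finset.sum_comm, ← Finset.sum_neg_distrib]
    refine Finset.sum_congr rfl fun i _ => ?_
    rw [← Finset.sum_neg_distrib]
    exact Finset.sum_congr rfl fun j _ => by rw [hg, inner_neg_right]
  simp only [inner_sub_left, Finset.sum_sub_distrib, hswap]
  ring

/-- Oddness of `f` makes the pairwise forces antisymmetric, so only the one-sided Lipschitz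
bound on `f` along the differences `(y i - y j) - (y' i - y' j)` enters. -/
lemma sum_inner_sum_sub_le_of_odd {f : E → E} {L : ℝ} (hodd : ∀ z, f (-z) = -f z)
    (hf : ∀ z z', ⟪z - z', f z - f z'⟫ ≤ L * ‖z - z'‖ ^ 2) (y y' : ι → E) :
    ∑ i, ⟪y i - y' i, ∑ j, (f (y i - y j) - f (y' i - y' j))⟫ ≤
      2 * Fintype.card ι * max L 0 * ∑ i, ‖y i - y' i‖ ^ 2 := by
  set Δ := fun i => y i - y' i
  set g := fun i j => f (y i - y j) - f (y' i - y' j)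
  have hg : ∀ i j, g j i = -g i j := fun i j => by
    simp only [g]
    rw [← neg_sub (y i), ← neg_sub (y' i), hodd, hodd]
    abel
  have hpair : ∀ i j, ⟪Δ i - Δ j, g i j⟫ ≤ max L 0 * (2 * ‖Δ i‖ ^ 2 + 2 * ‖Δ j‖ ^ 2) := by
    intro i j
    have hΔ : (y i - y j) - (y' i - y' j) = Δ i - Δ j := by simp only [Δ]; abel
    have := hf (y i - y j) (y' i - y' j)
    rw [hΔ] at this
    exact this.trans (mul_le_mul (le_max_left _ _) (norm_sub_sq_le_two_mul_add _ _)
      (sq_nonneg _) (le_max_right _ _))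
  have hsum : ∑ i, ∑ j : ι, max L 0 * (2 * ‖Δ i‖ ^ 2 + 2 * ‖Δ j‖ ^ 2) =
      4 * Fintype.card ι * max L 0 * ∑ i, ‖Δ i‖ ^ 2 := by
    simp only [mul_add, Finset.sum_add_distrib, Finset.sum_const, Finset.card_univ,
      nsmul_eq_mul, ← Finset.mul_sum]
    ring
  have := two_mul_sum_sum_inner_of_antisymm Δ hg
  simp only [inner_sum]
  linarith [Finset.sum_le_sum fun i (_ : i ∈ Finset.univ) =>
    Finset.sum_le_sum fun j (_ : j ∈ Finset.univ) => hpair i j]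

end Interaction

lemma norm_le_sqrt_card_mul_of_forall_norm_apply_le {ι : Type*} [Fintype ι] {β : ι → Type*}
    [∀ i, SeminormedAddCommGroup (β i)] {x : PiLp 2 β} {C : ℝ} (hC : 0 ≤ C)
    (hx : ∀ i, ‖x i‖ ≤ C) : ‖x‖ ≤ √(Fintype.card ι) * C := by
  rw [PiLp.norm_eq_of_L2, ← Real.sqrt_sq hC, ← Real.sqrt_mul (Nat.cast_nonneg _)]
  refine Real.sqrt_le_sqrt ((Finset.sum_le_sum fun i _ =>
    pow_le_pow_left₀ (norm_nonneg _) (hx i) 2).trans_eq ?_)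
  simp

lemma lipschitzOnWith_closedBall_of_norm_sub_le {E F : Type*} [SeminormedAddCommGroup E]
    [SeminormedAddCommGroup F] {g : E → F} {L q : ℝ} (hL : 0 ≤ L) (hq : 0 ≤ q)
    (hg : ∀ z z', ‖g z - g z'‖ ≤ L * (1 + ‖z‖ ^ q + ‖z'‖ ^ q) * ‖z - z'‖) (R : ℝ) :
    LipschitzOnWith (Real.toNNReal (L * (1 + 2 * R ^ q))) g (closedBall 0 R) := by
  refine LipschitzOnWith.of_dist_le' fun z hz z' hz' => ?_
  have hpow : ∀ w ∈ closedBall (0 : E) R, ‖w‖ ^ q ≤ R ^ q := fun w hw =>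
    Real.rpow_le_rpow (norm_nonneg _) (mem_closedBall_zero_iff.1 hw) hq
  rw [dist_eq_norm, dist_eq_norm]
  refine (hg z z').trans (mul_le_mul_of_nonneg_right (mul_le_mul_of_nonneg_left ?_ hL)
    (norm_nonneg _))
  linarith [hpow z hz, hpow z' hz']

section ParticleSystem

variable {d N : ℕ} {f : EuclideanSpace ℝ (Fin d) → EuclideanSpace ℝ (Fin d)}
  {u : EuclideanSpace ℝ (Fin d) → Measure (EuclideanSpace ℝ (Fin d)) → EuclideanSpace ℝ (Fin d)}

lemma isProbabilityMeasure_empMeas (hN : N ≠ 0) (a : Fin N → EuclideanSpace ℝ (Fin d)) :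
    IsProbabilityMeasure (empMeas a) := by
  constructor
  simp [empMeas, ENNReal.inv_mul_cancel, hN]

lemma vEmp_sub_vEmp (x x' : EuclideanSpace ℝ (Fin d)) (a a' : Fin N → EuclideanSpace ℝ (Fin d)) :
    vEmp f u x a - vEmp f u x' a' =
      (u x (empMeas a) - u x' (empMeas a)) + (u x' (empMeas a) - u x' (empMeas a')) +
        (N : ℝ)⁻¹ • ∑ j, (f (x - a j) - f (x' - a' j)) := by
  simp only [vEmp, Finset.sum_sub_distrib, smul_sub]
  abel

lemma sum_inner_vEmp_sub_le (hN : N ≠ 0) {Lf Lu Lut : ℝ}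
    (hodd : ∀ z, f (-z) = -f z) (hf : ∀ z z', ⟪z - z', f z - f z'⟫ ≤ Lf * ‖z - z'‖ ^ 2)
    (hu : ∀ μ, IsProbabilityMeasure μ → ∀ x x', ⟪x - x', u x μ - u x' μ⟫ ≤ Lu * ‖x - x'‖ ^ 2)
    (huemp : ∀ x (a b : Fin N → EuclideanSpace ℝ (Fin d)),
      ‖u x (empMeas a) - u x (empMeas b)‖ ^ 2 ≤ Lut / N * ∑ j, ‖a j - b j‖ ^ 2)
    (Y Y' : Fin N → EuclideanSpace ℝ (Fin d)) :
    ∑ i, ⟪Y i - Y' i, vEmp f u (Y i) Y - vEmp f u (Y' i) Y'⟫ ≤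
      (2 * max Lf 0 + Lu + Lut / 2 + 1 / 2) * ∑ i, ‖Y i - Y' i‖ ^ 2 := by
  set S := ∑ i, ‖Y i - Y' i‖ ^ 2
  simp only [vEmp_sub_vEmp, inner_add_right, Finset.sum_add_distrib, real_inner_smul_right,
    ← Finset.mul_sum]
  have hA : ∑ i, ⟪Y i - Y' i, u (Y i) (empMeas Y) - u (Y' i) (empMeas Y)⟫ ≤ Lu * S := by
    rw [Finset.mul_sum]
    exact Finset.sum_le_sum fun i _ => hu _ (isProbabilityMeasure_empMeas hN Y) _ _
  have hB : ∑ i, ⟪Y i - Y' i, u (Y' i) (empMeas Y) - u (Y' i) (empMeas Y')⟫ ≤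
      (1 / 2 + Lut / 2) * S := by
    calc _ ≤ ∑ i, (‖Y i - Y' i‖ ^ 2 / 2 + Lut / N * S / 2) := Finset.sum_le_sum fun i _ => by
          have := two_mul_le_add_sq ‖Y i - Y' i‖ ‖u (Y' i) (empMeas Y) - u (Y' i) (empMeas Y')‖
          linarith [real_inner_le_norm (Y i - Y' i) (u (Y' i) (empMeas Y) - u (Y' i) (empMeas Y')),
            huemp (Y' i) Y Y']
      _ = _ := by
          simp only [Finset.sum_add_distrib, ← Finset.sum_div, Finset.sum_const,
            Finset.card_univ, Fintype.card_fin, nsmul_eq_mul]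
          field_simp
          ring
  have hC : (N : ℝ)⁻¹ * ∑ i, ⟪Y i - Y' i, ∑ j, (f (Y i - Y j) - f (Y' i - Y' j))⟫ ≤
      2 * max Lf 0 * S := by
    have := sum_inner_sum_sub_le_of_odd hodd hf Y Y'
    rw [Fintype.card_fin] at this
    calc _ ≤ (N : ℝ)⁻¹ * (2 * N * max Lf 0 * S) := by gcongr
      _ = _ := by field_simp
  linarith

lemma norm_vEmp_sub_vEmp_le {R Lut : ℝ} {Kf Ku : NNReal}
    (hf : LipschitzOnWith Kf f (closedBall 0 (2 * R)))
    (hu : ∀ a : Fin N → EuclideanSpace ℝ (Fin d), LipschitzOnWith Ku (u · (empMeas a))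
      (closedBall 0 R))
    (huemp : ∀ x (a b : Fin N → EuclideanSpace ℝ (Fin d)),
      ‖u x (empMeas a) - u x (empMeas b)‖ ^ 2 ≤ Lut / N * ∑ j, ‖a j - b j‖ ^ 2)
    {Y Y' : PiLp 2 fun _ : Fin N => EuclideanSpace ℝ (Fin d)} (hY : ‖Y‖ ≤ R) (hY' : ‖Y'‖ ≤ R)
    (i : Fin N) :
    ‖vEmp f u (Y i) Y.ofLp - vEmp f u (Y' i) Y'.ofLp‖ ≤
      (Ku + √(Lut / N) + 2 * Kf) * ‖Y - Y'‖ := by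
  have hnorm : ∀ {Z : PiLp 2 fun _ : Fin N => EuclideanSpace ℝ (Fin d)}, ‖Z‖ ≤ R →
      ∀ j, ‖Z j‖ ≤ R := fun hZ j => (PiLp.norm_apply_le _ j).trans hZ
  have hΔ : ∀ j, ‖Y j - Y' j‖ ≤ ‖Y - Y'‖ := PiLp.norm_apply_le (Y - Y')
  have hA : ‖u (Y i) (empMeas Y.ofLp) - u (Y' i) (empMeas Y.ofLp)‖ ≤ Ku * ‖Y - Y'‖ :=
    ((hu _).norm_sub_le (mem_closedBall_zero_iff.2 (hnorm hY i))
      (mem_closedBall_zero_iff.2 (hnorm hY' i))).trans (by gcongr; exact hΔ i)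
  have hB : ‖u (Y' i) (empMeas Y.ofLp) - u (Y' i) (empMeas Y'.ofLp)‖ ≤
      √(Lut / N) * ‖Y - Y'‖ := by
    rw [← Real.sqrt_sq (norm_nonneg (Y - Y')), ← Real.sqrt_mul' _ (sq_nonneg _),
      PiLp.norm_sq_eq_of_L2]
    exact (le_abs_self _).trans (Real.abs_le_sqrt (huemp _ _ _))
  have hC : ‖(N : ℝ)⁻¹ • ∑ j, (f (Y i - Y j) - f (Y' i - Y' j))‖ ≤ 2 * Kf * ‖Y - Y'‖ := by
    have hdiff : ∀ {Z : PiLp 2 fun _ : Fin N => EuclideanSpace ℝ (Fin d)}, ‖Z‖ ≤ R →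
        ∀ j, Z i - Z j ∈ closedBall 0 (2 * R) := fun hZ j => mem_closedBall_zero_iff.2 <|
      (norm_sub_le _ _).trans (by linarith [hnorm hZ i, hnorm hZ j])
    have hterm : ∀ j, ‖f (Y i - Y j) - f (Y' i - Y' j)‖ ≤ 2 * Kf * ‖Y - Y'‖ := fun j => by
      refine (hf.norm_sub_le (hdiff hY j) (hdiff hY' j)).trans ?_
      rw [sub_sub_sub_comm, mul_comm 2, mul_assoc]
      gcongr
      exact (norm_sub_le _ _).trans (by linarith [hΔ i, hΔ j])
    have hN : (N : ℝ) ≠ 0 := Nat.cast_ne_zero.2 i.pos.ne'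
    rw [norm_smul, norm_inv, Real.norm_natCast, inv_mul_le_iff₀ (by positivity)]
    exact (norm_sum_le_of_le _ fun j _ => hterm j).trans_eq (by simp)
  rw [vEmp_sub_vEmp]
  exact (norm_add₃_le ..).trans (by linarith)

/-- The system map `V`, on `(ℝ^d)^N` with its Euclidean (`ℓ²`) structure. -/
noncomputable def systemDrift (f : EuclideanSpace ℝ (Fin d) → EuclideanSpace ℝ (Fin d))
    (u : EuclideanSpace ℝ (Fin d) → Measure (EuclideanSpace ℝ (Fin d)) →
      EuclideanSpace ℝ (Fin d))
    (Y : PiLp 2 fun _ : Fin N => EuclideanSpace ℝ (Fin d)) :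
    PiLp 2 fun _ : Fin N => EuclideanSpace ℝ (Fin d) :=
  WithLp.toLp 2 fun i => vEmp f u (Y i) Y.ofLp

lemma inner_systemDrift_sub_le (hN : N ≠ 0) {Lf Lu Lut : ℝ}
    (hodd : ∀ z, f (-z) = -f z) (hf : ∀ z z', ⟪z - z', f z - f z'⟫ ≤ Lf * ‖z - z'‖ ^ 2)
    (hu : ∀ μ, IsProbabilityMeasure μ → ∀ x x', ⟪x - x', u x μ - u x' μ⟫ ≤ Lu * ‖x - x'‖ ^ 2)
    (huemp : ∀ x (a b : Fin N → EuclideanSpace ℝ (Fin d)),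
      ‖u x (empMeas a) - u x (empMeas b)‖ ^ 2 ≤ Lut / N * ∑ j, ‖a j - b j‖ ^ 2)
    (Y Y' : PiLp 2 fun _ : Fin N => EuclideanSpace ℝ (Fin d)) :
    ⟪Y - Y', systemDrift f u Y - systemDrift f u Y'⟫ ≤
      (2 * max Lf 0 + Lu + Lut / 2 + 1 / 2) * ‖Y - Y'‖ ^ 2 := by
  rw [PiLp.inner_apply, PiLp.norm_sq_eq_of_L2]
  exact sum_inner_vEmp_sub_le hN hodd hf hu huemp Y.ofLp Y'.ofLp

lemma lipschitzOnWith_systemDrift (hN : N ≠ 0) {Lfh Luh q Lut : ℝ} (hLfh : 0 ≤ Lfh) (hLuh : 0 ≤ Luh)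
    (hq : 0 ≤ q) (hfloc : ∀ z z', ‖f z - f z'‖ ≤ Lfh * (1 + ‖z‖ ^ q + ‖z'‖ ^ q) * ‖z - z'‖)
    (huloc : ∀ μ, IsProbabilityMeasure μ →
      ∀ x x', ‖u x μ - u x' μ‖ ≤ Luh * (1 + ‖x‖ ^ q + ‖x'‖ ^ q) * ‖x - x'‖)
    (huemp : ∀ x (a b : Fin N → EuclideanSpace ℝ (Fin d)),
      ‖u x (empMeas a) - u x (empMeas b)‖ ^ 2 ≤ Lut / N * ∑ j, ‖a j - b j‖ ^ 2)
    (R : ℝ) :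
    ∃ K, LipschitzOnWith K (systemDrift f u)
      (closedBall (0 : PiLp 2 fun _ : Fin N => EuclideanSpace ℝ (Fin d)) R) := by
  obtain ⟨Kf, hf⟩ : ∃ K, LipschitzOnWith K f (closedBall 0 (2 * R)) :=
    ⟨_, lipschitzOnWith_closedBall_of_norm_sub_le hLfh hq hfloc _⟩
  obtain ⟨Ku, hu⟩ : ∃ K, ∀ a : Fin N → EuclideanSpace ℝ (Fin d),
      LipschitzOnWith K (u · (empMeas a)) (closedBall 0 R) :=
    ⟨_, fun a => lipschitzOnWith_closedBall_of_norm_sub_le hLuh hq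
      (huloc _ (isProbabilityMeasure_empMeas hN a)) R⟩
  refine ⟨_, LipschitzOnWith.of_dist_le' (K := √N * (Ku + √(Lut / N) + 2 * Kf))
    fun Y hY Y' hY' => ?_⟩
  rw [dist_eq_norm, dist_eq_norm, mul_assoc]
  refine (norm_le_sqrt_card_mul_of_forall_norm_apply_le (by positivity) fun i =>
    norm_vEmp_sub_vEmp_le hf hu huemp (mem_closedBall_zero_iff.1 hY)
      (mem_closedBall_zero_iff.1 hY') i).trans_eq ?_
  rw [Fintype.card_fin]

lemma forall_eq_add_smul_vEmp_iff (h : ℝ) (X Y : Fin N → EuclideanSpace ℝ (Fin d)) :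
    (∀ i, Y i = X i + h • vEmp f u (Y i) Y) ↔
      WithLp.toLp 2 Y = WithLp.toLp 2 X + h • systemDrift f u (WithLp.toLp 2 Y) := by
  simp [PiLp.ext_iff, systemDrift]

end ParticleSystem

theorem implicit_step_wellposed_general (d N : ℕ) (hN : 1 ≤ N)
    (f : EuclideanSpace ℝ (Fin d) → EuclideanSpace ℝ (Fin d))
    (u : EuclideanSpace ℝ (Fin d) → Measure (EuclideanSpace ℝ (Fin d)) →
      EuclideanSpace ℝ (Fin d))
    (Lf Lu : ℝ) (Lfh Luh q : ℝ) (hLfh : 0 < Lfh) (hLuh : 0 < Luh) (hq : 0 < q)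
    (Lut : ℝ) (hLut : 0 ≤ Lut)
    (hodd : ∀ z : EuclideanSpace ℝ (Fin d), f (-z) = -f z)
    (hf : ∀ z z' : EuclideanSpace ℝ (Fin d), ⟪z - z', f z - f z'⟫ ≤ Lf * ‖z - z'‖ ^ 2)
    (hfloc : ∀ z z' : EuclideanSpace ℝ (Fin d),
      ‖f z - f z'‖ ≤ Lfh * (1 + ‖z‖ ^ q + ‖z'‖ ^ q) * ‖z - z'‖)
    (hu : ∀ μ : Measure (EuclideanSpace ℝ (Fin d)), IsProbabilityMeasure μ →
      ∀ x x' : EuclideanSpace ℝ (Fin d), ⟪x - x', u x μ - u x' μ⟫ ≤ Lu * ‖x - x'‖ ^ 2)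
    (huloc : ∀ μ : Measure (EuclideanSpace ℝ (Fin d)), IsProbabilityMeasure μ →
      ∀ x x' : EuclideanSpace ℝ (Fin d),
        ‖u x μ - u x' μ‖ ≤ Luh * (1 + ‖x‖ ^ q + ‖x'‖ ^ q) * ‖x - x'‖)
    (huemp : ∀ (x : EuclideanSpace ℝ (Fin d)) (a b : Fin N → EuclideanSpace ℝ (Fin d)),
      ‖u x (empMeas a) - u x (empMeas b)‖ ^ 2 ≤ Lut / N * ∑ j, ‖a j - b j‖ ^ 2)
    (h : ℝ) (hh0 : 0 < h)
    (hhζ : h * max (2 * (Lf + Lu)) (max (4 * max Lf 0 + 2 * Lu + 2 * Lut + 1) 0) < 1) :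
    (∀ X : Fin N → EuclideanSpace ℝ (Fin d),
      ∃! Y : Fin N → EuclideanSpace ℝ (Fin d), ∀ i, Y i = X i + h • vEmp f u (Y i) Y) ∧
    ∃ Φ : (Fin N → EuclideanSpace ℝ (Fin d)) → (Fin N → EuclideanSpace ℝ (Fin d)),
      Continuous Φ ∧
        ∀ (X : Fin N → EuclideanSpace ℝ (Fin d)) (i : Fin N),
          Φ X i = X i + h • vEmp f u (Φ X i) (Φ X) := by
  have hN0 : N ≠ 0 := Nat.one_le_iff_ne_zero.mp hN
  have hκ : h * (2 * max Lf 0 + Lu + Lut / 2 + 1 / 2) < 1 := by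
    have : 2 * (2 * max Lf 0 + Lu + Lut / 2 + 1 / 2) ≤
        max (2 * (Lf + Lu)) (max (4 * max Lf 0 + 2 * Lu + 2 * Lut + 1) 0) :=
      le_max_of_le_right (le_max_of_le_left (by linarith))
    nlinarith
  obtain ⟨Φ, hΦ, hsol⟩ := exists_continuous_implicit_step_solution hh0.le hκ
    (inner_systemDrift_sub_le hN0 hodd hf hu huemp)
    (lipschitzOnWith_systemDrift hN0 hLfh.le hLuh.le hq.le hfloc huloc huemp)
  have key : ∀ X Y, (∀ i, Y i = X i + h • vEmp f u (Y i) Y) ↔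
      Y = (Φ (WithLp.toLp 2 X)).ofLp := fun X Y => by
    rw [forall_eq_add_smul_vEmp_iff, hsol, WithLp.ext_iff, WithLp.ofLp_toLp]
  exact ⟨fun X => ⟨_, (key X _).2 rfl, fun Y hY => (key X Y).1 hY⟩,
    fun X => (Φ (WithLp.toLp 2 X)).ofLp,
    (PiLp.continuous_ofLp 2 _).comp (hΦ.comp (PiLp.continuous_toLp 2 _)),
    fun X => (key X _).2 rfl⟩

/-- Well-posedness of the implicit step of the split-step method:
for `h` with `h·ζ < 1`, for every `X ∈ (ℝ^d)^N` there is a unique `Y ∈ (ℝ^d)^N` with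
`Y = X + h·V(Y)`, and the solution map `X ↦ Y` is continuous. -/
theorem implicit_step_wellposed (d N : ℕ) (hd : 1 ≤ d) (hN : 1 ≤ N)
    (f : EuclideanSpace ℝ (Fin d) → EuclideanSpace ℝ (Fin d))
    (u : EuclideanSpace ℝ (Fin d) → Measure (EuclideanSpace ℝ (Fin d)) →
      EuclideanSpace ℝ (Fin d))
    (Lf Lu : ℝ) (Lfh Luh q : ℝ) (hLfh : 0 < Lfh) (hLuh : 0 < Luh) (hq : 0 < q)
    (Lut : ℝ) (hLut : 0 ≤ Lut)
    (hodd : ∀ z : EuclideanSpace ℝ (Fin d), f (-z) = -f z)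
    (hf0 : f 0 = 0)
    (hf : ∀ z z' : EuclideanSpace ℝ (Fin d), ⟪z - z', f z - f z'⟫ ≤ Lf * ‖z - z'‖ ^ 2)
    (hfloc : ∀ z z' : EuclideanSpace ℝ (Fin d),
      ‖f z - f z'‖ ≤ Lfh * (1 + ‖z‖ ^ q + ‖z'‖ ^ q) * ‖z - z'‖)
    (hu : ∀ μ : Measure (EuclideanSpace ℝ (Fin d)), IsProbabilityMeasure μ →
      ∀ x x' : EuclideanSpace ℝ (Fin d), ⟪x - x', u x μ - u x' μ⟫ ≤ Lu * ‖x - x'‖ ^ 2)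
    (huloc : ∀ μ : Measure (EuclideanSpace ℝ (Fin d)), IsProbabilityMeasure μ →
      ∀ x x' : EuclideanSpace ℝ (Fin d),
        ‖u x μ - u x' μ‖ ≤ Luh * (1 + ‖x‖ ^ q + ‖x'‖ ^ q) * ‖x - x'‖)
    (huemp : ∀ (x : EuclideanSpace ℝ (Fin d)) (a b : Fin N → EuclideanSpace ℝ (Fin d)),
      ‖u x (empMeas a) - u x (empMeas b)‖ ^ 2 ≤ Lut / N * ∑ j, ‖a j - b j‖ ^ 2)
    (h : ℝ) (hh0 : 0 < h) (hh1 : h < 1)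
    (hhζ : h * max (2 * (Lf + Lu)) (max (4 * max Lf 0 + 2 * Lu + 2 * Lut + 1) 0) < 1) :
    (∀ X : Fin N → EuclideanSpace ℝ (Fin d),
      ∃! Y : Fin N → EuclideanSpace ℝ (Fin d), ∀ i, Y i = X i + h • vEmp f u (Y i) Y) ∧
    ∃ Φ : (Fin N → EuclideanSpace ℝ (Fin d)) → (Fin N → EuclideanSpace ℝ (Fin d)),
      Continuous Φ ∧
        ∀ (X : Fin N → EuclideanSpace ℝ (Fin d)) (i : Fin N),
          Φ X i = X i + h • vEmp f u (Φ X i) (Φ X) :=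
  implicit_step_wellposed_general d N hN f u Lf Lu Lfh Luh q hLfh hLuh hq Lut hLut hodd hf hfloc hu
    huloc huemp h hh0 hhζ
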